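/- (Transfer consequence of the Simulation Lemma, Section 4.1.) Let M1 = (T1, R1) and M2 = (T2, R2) be two stochastic finite MDPs on the same nonempty finite state space S and nonempty finite action space A satisfying hypotheses (i)–(iii) of the Simulation Lemma with parameters δR, δT ≥ 0 (rewards nonnegative, every length-H cumulative reward at most 1, reward differences at most δR pointwise, ℓ1 transition differences at most δT pointwise), and fix a horizon H ≥ 1 and an initial state s0. If a stochastic stationary policy π : S → PMF(A) satisfies V1(H, s0; π) ≥ max_{π' : S → PMF(A)} V1(H, s0; π') − η for some η ≥ 0, then V2(H, s0; π) ≥ max_{π' : S → PMF(A)} V2(H, s0; π') − η − 2(δR + δT)·H. -/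

import Mathlib

/-!
For a fixed policy, the values in the two MDPs drift apart by at most `δR + δT` per step: the
rewards differ by at most `δR`, and the next-step value of `M2`, which lies in `[0, 1]` because
cumulative rewards are at most `1`, is averaged against two kernels at `ℓ¹`-distance at most
`δT`. So `|V₁(H, s₀; π') - V₂(H, s₀; π')| ≤ (δR + δT) H` for every policy `π'`; applying this
once to the competitors `π'` (to compare the optima) and once to `π` costs the factor `2`.
-/

open scoped BigOperators

open Finset

namespace PMF

variable {α : Type*} [Fintype α]

lemma sum_toReal (p : PMF α) : ∑ a, (p a).toReal = 1 := by
  rw [← ENNReal.toReal_sum fun a _ => p.apply_ne_top a, ← tsum_fintype (L := .unconditional _),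
    p.tsum_coe, ENNReal.toReal_one]

lemma sum_toReal_mul_le (p : PMF α) {f : α → ℝ} {c : ℝ} (hf : ∀ a, f a ≤ c) :
    ∑ a, (p a).toReal * f a ≤ c :=
  calc ∑ a, (p a).toReal * f a ≤ ∑ a, (p a).toReal * c :=
        sum_le_sum fun a _ => mul_le_mul_of_nonneg_left (hf a) ENNReal.toReal_nonneg
    _ = c := by rw [← sum_mul, p.sum_toReal, one_mul]

lemma abs_sum_toReal_mul_le (p : PMF α) {f : α → ℝ} {c : ℝ} (hf : ∀ a, |f a| ≤ c) :
    |∑ a, (p a).toReal * f a| ≤ c :=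
  calc |∑ a, (p a).toReal * f a| ≤ ∑ a, (p a).toReal * |f a| := by
        refine (abs_sum_le_sum_abs _ _).trans_eq (sum_congr rfl fun a _ => ?_)
        rw [abs_mul, ENNReal.abs_toReal]
    _ ≤ c := p.sum_toReal_mul_le hf

lemma abs_sum_toReal_mul_sub_le (p q : PMF α) {f g : α → ℝ} {M ε : ℝ}
    (hg : ∀ a, |g a| ≤ M) (hfg : ∀ a, |f a - g a| ≤ ε) :
    |∑ a, (p a).toReal * f a - ∑ a, (q a).toReal * g a| ≤
      (∑ a, |(p a).toReal - (q a).toReal|) * M + ε := by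
  have hsplit : ∑ a, (p a).toReal * f a - ∑ a, (q a).toReal * g a =
      ∑ a, ((p a).toReal - (q a).toReal) * g a + ∑ a, (p a).toReal * (f a - g a) := by
    rw [← sum_sub_distrib, ← sum_add_distrib]
    exact sum_congr rfl fun a _ => by ring
  have hkernel : |∑ a, ((p a).toReal - (q a).toReal) * g a| ≤
      (∑ a, |(p a).toReal - (q a).toReal|) * M :=
    calc |∑ a, ((p a).toReal - (q a).toReal) * g a|
        ≤ ∑ a, |(p a).toReal - (q a).toReal| * |g a| := by
          simpa only [abs_mul] using
            abs_sum_le_sum_abs (fun a => ((p a).toReal - (q a).toReal) * g a) univ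
      _ ≤ ∑ a, |(p a).toReal - (q a).toReal| * M :=
          sum_le_sum fun a _ => mul_le_mul_of_nonneg_left (hg a) (abs_nonneg _)
      _ = (∑ a, |(p a).toReal - (q a).toReal|) * M := (sum_mul _ _ _).symm
  rw [hsplit]
  exact (abs_add_le _ _).trans (add_le_add hkernel (p.abs_sum_toReal_mul_le hfg))

end PMF

/-- The `h`-step value of a stochastic stationary policy `π` in the stochastic finite MDP
with transition kernel `T` and reward function `R`:
`V 0 s = 0`, `V (h+1) s = Σ_a π(s)(a) · (R(s,a) + Σ_{s'} T(s,a)(s') · V h s')`. -/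
noncomputable def stochVal {S A : Type*} [Fintype S] [Fintype A]
    (T : S → A → PMF S) (R : S → A → ℝ) (π : S → PMF A) : ℕ → S → ℝ
  | 0, _ => 0
  | h + 1, s =>
      ∑ a : A, ((π s) a).toReal *
        (R s a + ∑ s' : S, ((T s a) s').toReal * stochVal T R π h s')

lemma le_one_div_of_forall_sum_fin_le_one {S A : Type*} {R : S → A → ℝ} {H : ℕ}
    (hH : 1 ≤ H)
    (hbdd : ∀ sa : Fin H → S × A, ∑ t : Fin H, R (sa t).1 (sa t).2 ≤ 1) (s : S) (a : A) :
    R s a ≤ 1 / H := by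
  have hconst := hbdd fun _ => (s, a)
  simp only [sum_const, card_univ, Fintype.card_fin, nsmul_eq_mul] at hconst
  rw [le_div_iff₀ (by exact_mod_cast hH), mul_comm]
  exact hconst

section stochVal

variable {S A : Type*} [Fintype S] [Fintype A]

lemma stochVal_nonneg (T : S → A → PMF S) {R : S → A → ℝ} (π : S → PMF A)
    (hR : ∀ s a, 0 ≤ R s a) (h : ℕ) (s : S) : 0 ≤ stochVal T R π h s := by
  induction h generalizing s with
  | zero => rfl
  | succ h ih =>
    exact sum_nonneg fun a _ => mul_nonneg ENNReal.toReal_nonneg <| add_nonneg (hR s a) <|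
      sum_nonneg fun s' _ => mul_nonneg ENNReal.toReal_nonneg (ih s')

lemma stochVal_le (T : S → A → PMF S) {R : S → A → ℝ} (π : S → PMF A) {B : ℝ}
    (hR : ∀ s a, R s a ≤ B) (h : ℕ) (s : S) : stochVal T R π h s ≤ h * B := by
  induction h generalizing s with
  | zero => simp [stochVal]
  | succ h ih =>
    refine (π s).sum_toReal_mul_le fun a => ?_
    have hnext := (T s a).sum_toReal_mul_le ih
    push_cast
    linarith [hR s a]

lemma bddAbove_range_stochVal (T : S → A → PMF S) (R : S → A → ℝ) (h : ℕ) (s : S) :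
    BddAbove (Set.range fun π : S → PMF A => stochVal T R π h s) := by
  obtain ⟨B, hB⟩ := (Set.finite_range fun sa : S × A => R sa.1 sa.2).bddAbove
  refine ⟨h * B, ?_⟩
  rintro _ ⟨π, rfl⟩
  exact stochVal_le T π (fun s a => hB ⟨(s, a), rfl⟩) h s

lemma abs_stochVal_le_one (T : S → A → PMF S) {R : S → A → ℝ} (π : S → PMF A) {H : ℕ}
    (hH : 1 ≤ H) (hR : ∀ s a, 0 ≤ R s a)
    (hbdd : ∀ sa : Fin H → S × A, ∑ t : Fin H, R (sa t).1 (sa t).2 ≤ 1)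
    {h : ℕ} (hh : h ≤ H) (s : S) : |stochVal T R π h s| ≤ 1 := by
  have hle := stochVal_le T π (le_one_div_of_forall_sum_fin_le_one hH hbdd) h s
  rw [mul_one_div] at hle
  have hhH : (h : ℝ) / H ≤ 1 := (div_le_one (by exact_mod_cast hH)).2 (by exact_mod_cast hh)
  exact abs_le.2 ⟨by linarith [stochVal_nonneg T π hR h s], hle.trans hhH⟩

/-- The simulation lemma. -/
theorem abs_stochVal_sub_le (T1 T2 : S → A → PMF S) (R1 R2 : S → A → ℝ) (π : S → PMF A)
    {δR δT M : ℝ} (hrew : ∀ s a, |R1 s a - R2 s a| ≤ δR)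
    (htrans : ∀ s a, ∑ s', |((T1 s a) s').toReal - ((T2 s a) s').toReal| ≤ δT)
    (hM : 0 ≤ M) (h : ℕ) (hV : ∀ k < h, ∀ s, |stochVal T2 R2 π k s| ≤ M) (s : S) :
    |stochVal T1 R1 π h s - stochVal T2 R2 π h s| ≤ h * (δR + δT * M) := by
  induction h generalizing s with
  | zero => simp [stochVal]
  | succ h ih =>
    have hstep : ∀ a,
        |(R1 s a + ∑ s', ((T1 s a) s').toReal * stochVal T1 R1 π h s') -
          (R2 s a + ∑ s', ((T2 s a) s').toReal * stochVal T2 R2 π h s')| ≤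
          (h + 1 : ℕ) * (δR + δT * M) := by
      intro a
      have hnext := (T1 s a).abs_sum_toReal_mul_sub_le (T2 s a) (hV h (Nat.lt_succ_self h))
        (ih (fun k hk => hV k (hk.trans (Nat.lt_succ_self h))))
      have hkernel := mul_le_mul_of_nonneg_right (htrans s a) hM
      rw [add_sub_add_comm]
      refine (abs_add_le _ _).trans ?_
      push_cast
      linarith [hrew s a]
    simp only [stochVal]
    rw [← sum_sub_distrib]
    simp only [← mul_sub]
    exact (π s).abs_sum_toReal_mul_le hstep

end stochVal

theorem simulation_lemma_transfer_general
    {S A : Type*} [Fintype S] [Fintype A] [Nonempty A]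
    (T1 T2 : S → A → PMF S) (R1 R2 : S → A → ℝ)
    (H : ℕ) (hH : 1 ≤ H)
    (δR δT : ℝ)
    (hrew : ∀ s : S, ∀ a : A, |R1 s a - R2 s a| ≤ δR)
    (htrans : ∀ s : S, ∀ a : A,
      (∑ s' : S, |((T1 s a) s').toReal - ((T2 s a) s').toReal|) ≤ δT)
    (hnonneg2 : ∀ s : S, ∀ a : A, 0 ≤ R2 s a)
    (hbdd2 : ∀ sa : Fin H → S × A, (∑ t : Fin H, R2 (sa t).1 (sa t).2) ≤ 1)
    (s0 : S)
    (π : S → PMF A) (η : ℝ)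
    (hopt1 : stochVal T1 R1 π H s0 ≥ (⨆ π' : S → PMF A, stochVal T1 R1 π' H s0) - η) :
    stochVal T2 R2 π H s0 ≥
      (⨆ π' : S → PMF A, stochVal T2 R2 π' H s0) - η - 2 * (δR + δT) * H := by
  have hsim : ∀ π' : S → PMF A,
      |stochVal T1 R1 π' H s0 - stochVal T2 R2 π' H s0| ≤ H * (δR + δT) := fun π' => by
    simpa only [mul_one] using abs_stochVal_sub_le T1 T2 R1 R2 π' hrew htrans zero_le_one H
      (fun k hk => abs_stochVal_le_one T2 π' hH hnonneg2 hbdd2 hk.le) s0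
  have hsup : (⨆ π' : S → PMF A, stochVal T2 R2 π' H s0) ≤
      (⨆ π' : S → PMF A, stochVal T1 R1 π' H s0) + H * (δR + δT) :=
    ciSup_le fun π' => by
      linarith [(abs_le.1 (hsim π')).1, le_ciSup (bddAbove_range_stochVal T1 R1 H s0) π']
  linarith [(abs_le.1 (hsim π)).2]

/-- **Transfer consequence of the Simulation Lemma (Section 4.1).** A policy that is
`η`-optimal in `M1` is `(η + 2(δR + δT)·H)`-optimal in `M2`.  The maximum over stochastic
stationary policies is written as a supremum (it is attained, e.g. at a deterministic
policy, so the supremum equals the maximum). -/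
theorem simulation_lemma_transfer
    {S A : Type*} [Fintype S] [Nonempty S] [Fintype A] [Nonempty A]
    (T1 T2 : S → A → PMF S) (R1 R2 : S → A → ℝ)
    (H : ℕ) (hH : 1 ≤ H)
    (δR δT : ℝ) (hδR : 0 ≤ δR) (hδT : 0 ≤ δT)
    (hrew : ∀ s : S, ∀ a : A, |R1 s a - R2 s a| ≤ δR)
    (htrans : ∀ s : S, ∀ a : A,
      (∑ s' : S, |((T1 s a) s').toReal - ((T2 s a) s').toReal|) ≤ δT)
    (hnonneg1 : ∀ s : S, ∀ a : A, 0 ≤ R1 s a)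
    (hnonneg2 : ∀ s : S, ∀ a : A, 0 ≤ R2 s a)
    (hbdd1 : ∀ sa : Fin H → S × A, (∑ t : Fin H, R1 (sa t).1 (sa t).2) ≤ 1)
    (hbdd2 : ∀ sa : Fin H → S × A, (∑ t : Fin H, R2 (sa t).1 (sa t).2) ≤ 1)
    (s0 : S)
    (π : S → PMF A) (η : ℝ) (hη : 0 ≤ η)
    (hopt1 : stochVal T1 R1 π H s0 ≥ (⨆ π' : S → PMF A, stochVal T1 R1 π' H s0) - η) :
    stochVal T2 R2 π H s0 ≥
      (⨆ π' : S → PMF A, stochVal T2 R2 π' H s0) - η - 2 * (δR + δT) * H :=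
  simulation_lemma_transfer_general T1 T2 R1 R2 H hH δR δT hrew htrans hnonneg2 hbdd2 s0 π η hopt1
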